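/- arXiv:1102.1179 — 3 statements merged into one kernel-verified Lean document; each statement's English description precedes it below -/
import Mathlib

section
/- For every φ ∈ L²((0,∞), dξ/ξ), the function z ↦ W_{ν,0}[φ](z) = ((2ν−1)/(π Γ(2ν)))^{1/2} (1−z)^{−2ν} ∫₀^∞ ξ^{ν} exp(−(ξ/2)(1+z)/(1−z)) φ(ξ) dξ/ξ is holomorphic on the unit disk 𝔻. -/
open MeasureTheory Complex Real Set

noncomputable section

/-- The measure `dξ/ξ` on `(0,∞)`. -/
def mIoi : Measure ℝ :=
  (volume.restrict (Set.Ioi (0:ℝ))).withDensity (fun ξ => ENNReal.ofReal ξ⁻¹)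

/-- The weighted measure `(1-|z|²)^{2ν-2} dμ(z)` on the unit disk. -/
def mD (ν : ℝ) : Measure ℂ :=
  (volume.restrict {z : ℂ | ‖z‖ < 1}).withDensity
    (fun z => ENNReal.ofReal ((1 - ‖z‖ ^ 2) ^ (2*ν - 2)))

/-- Generalized Laguerre polynomial `L_n^{(α)}(x)`. -/
def lag (α : ℝ) (n : ℕ) (x : ℝ) : ℝ :=
  ∑ j ∈ Finset.range (n+1),
    (-1)^j * (Real.Gamma (n + α + 1) /
      (Real.Gamma (j + α + 1) * (Nat.factorial (n - j)) * (Nat.factorial j))) * x ^ j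

/-- Jacobi polynomial `P_n^{(a,b)}(x)`. -/
def jac (a b : ℝ) (n : ℕ) (x : ℝ) : ℝ :=
  ∑ s ∈ Finset.range (n+1),
    (Real.Gamma (n + a + 1) / (Real.Gamma (a + s + 1) * (Nat.factorial (n - s)))) *
    (Real.Gamma (n + b + 1) / (Real.Gamma (n + b - s + 1) * (Nat.factorial s))) *
    ((x - 1)/2)^s * ((x + 1)/2)^(n - s)

/-- The eigenfunctions `φ_k^{ν,m}`. -/
def phiE (ν : ℝ) (m k : ℕ) (z : ℂ) : ℂ :=
  (-1)^(min m k) * ((((1 - ‖z‖ ^ 2) ^ m)⁻¹ : ℝ) : ℂ) *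
    (if k ≤ m then (starRingEnd ℂ z)^(m - k) else z^(k - m)) *
    ((jac ((max m k - min m k : ℕ) : ℝ) (2*(ν - m) - 1) (min m k)
        (1 - 2 * ‖z‖ ^ 2) : ℝ) : ℂ)

/-- The square norms `ρ_k^{ν,m}`. -/
def rhoN (ν : ℝ) (m k : ℕ) : ℝ :=
  (π / (2*(ν - m) - 1)) *
    ((Nat.factorial (max m k)) * Real.Gamma (2*(ν - m) + min m k)) /
    ((Nat.factorial (min m k)) * Real.Gamma (2*(ν - m) + max m k))

/-- The Laguerre basis functions `ψ_{ν,m;k}` of `L²((0,∞), dξ/ξ)`. -/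
def psiF (ν : ℝ) (m k : ℕ) (ξ : ℝ) : ℝ :=
  Real.sqrt (Nat.factorial k / Real.Gamma (2*(ν - m) + k)) * ξ ^ (ν - (m:ℝ)) *
    Real.exp (-ξ/2) * lag (2*(ν - m) - 1) k ξ

/-- The kernel of the integral defining the generalized second Bargmann transform. -/
def WKer (ν : ℝ) (m : ℕ) (z : ℂ) (ξ : ℝ) : ℂ :=
  ((ξ ^ (ν - (m:ℝ)) : ℝ) : ℂ) *
    Complex.exp (-(ξ:ℂ)/2 * ((1 + z)/(1 - z))) *
    ((lag (2*(ν - m) - 1) m (ξ * (1 - ‖z‖ ^ 2) / ‖1 - z‖ ^ 2) : ℝ) : ℂ)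

/-- The generalized second Bargmann transform `W_{ν,m}`. -/
def W (ν : ℝ) (m : ℕ) (φ : ℝ → ℂ) (z : ℂ) : ℂ :=
  (Real.sqrt ((2*(ν - m) - 1) * Nat.factorial m / (π * Real.Gamma (2*ν - m))) : ℂ) *
  (((‖1 - z‖ / (1 - ‖z‖ ^ 2)) ^ (2*m) : ℝ) : ℂ) *
  (1 - z) ^ ((-(2*ν) : ℝ) : ℂ) *
  ∫ ξ, WKer ν m z ξ * φ ξ ∂mIoi

/-- The coherent state wave functions `Ψ_{ν,m;z}`. -/
def PsiCS (ν : ℝ) (m : ℕ) (z : ℂ) (ξ : ℝ) : ℂ :=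
  (-1)^m * (Real.sqrt (Nat.factorial m / Real.Gamma (2*ν - m)) : ℂ) *
  ((‖1 - z‖ ^ (2*m) : ℝ) : ℂ) * (1 - z) ^ ((-(2*ν) : ℝ) : ℂ) *
  (((1 - ‖z‖ ^ 2) ^ (ν - (m:ℝ)) : ℝ) : ℂ) * ((ξ ^ (ν - (m:ℝ)) : ℝ) : ℂ) *
  Complex.exp (-(ξ:ℂ)/2 * ((1 + z)/(1 - z))) *
  ((lag (2*(ν - m) - 1) m (ξ * (1 - ‖z‖ ^ 2) / ‖1 - z‖ ^ 2) : ℝ) : ℂ)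

/-- The reproducing kernel `K_m^ν(z,w)`. -/
def KK (ν : ℝ) (m : ℕ) (z w : ℂ) : ℂ :=
  (((2*(ν - m) - 1) / π : ℝ) : ℂ) *
  (1 - z * (starRingEnd ℂ w)) ^ ((-(2*ν) : ℝ) : ℂ) *
  (((‖1 - z * (starRingEnd ℂ w)‖ ^ 2 /
      ((1 - ‖z‖ ^ 2) * (1 - ‖w‖ ^ 2))) ^ m : ℝ) : ℂ) *
  ((jac 0 (2*(ν - m) - 1) m
      (2 * (1 - ‖z‖ ^ 2) * (1 - ‖w‖ ^ 2) /
        ‖1 - z * (starRingEnd ℂ w)‖ ^ 2 - 1) : ℝ) : ℂ)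

/-- Wirtinger derivative `∂/∂z`. -/
def wirtZ (f : ℂ → ℂ) (z : ℂ) : ℂ :=
  (fderiv ℝ f z 1 - Complex.I * fderiv ℝ f z Complex.I) / 2

/-- Wirtinger derivative `∂/∂z̄`. -/
def wirtZbar (f : ℂ → ℂ) (z : ℂ) : ℂ :=
  (fderiv ℝ f z 1 + Complex.I * fderiv ℝ f z Complex.I) / 2

/-- The magnetic Schrödinger-type operator `H_ν`. -/
def Hop (ν : ℝ) (f : ℂ → ℂ) (z : ℂ) : ℂ :=
  -4 * (((1 - ‖z‖ ^ 2 : ℝ)) : ℂ) *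
    ((((1 - ‖z‖ ^ 2 : ℝ)) : ℂ) * wirtZ (wirtZbar f) z
      - 2*(ν:ℂ) * (starRingEnd ℂ z) * wirtZbar f z)

end

/-!
For `m = 0` the Laguerre factor of the kernel is `L₀ = 1`, so up to the holomorphic factor
`(1 - z)^(-2ν)` the transform is the Laplace transform, with respect to `dξ/ξ`, of `ξ^ν φ(ξ)`
evaluated at `(1 + z) / (2 (1 - z))`. The Cayley map sends the disk into the right half-plane.
There the Laplace transform is holomorphic by differentiation under the integral sign: by
Cauchy–Schwarz against `ξ^ν e^{-cξ} ∈ L²(dξ/ξ)` it converges absolutely for `Re s > 0`, and the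
factor `ξ` produced by differentiation is absorbed by `ξ e^{-cξ} ≤ 1/c`.
-/

noncomputable def laplaceTransform (μ : Measure ℝ) (f : ℝ → ℂ) (s : ℂ) : ℂ :=
  ∫ ξ, cexp (-(ξ * s)) * f ξ ∂μ

section LaplaceTransform

lemma mul_exp_neg_mul_le_inv {c : ℝ} (hc : 0 < c) (ξ : ℝ) : ξ * Real.exp (-(c * ξ)) ≤ c⁻¹ := by
  rw [Real.exp_neg, ← div_eq_mul_inv, div_le_iff₀ (Real.exp_pos _)]
  calc ξ = c⁻¹ * (c * ξ) := by field_simp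
    _ ≤ c⁻¹ * Real.exp (c * ξ) := by gcongr; linarith [Real.add_one_le_exp (c * ξ)]

lemma norm_cexp_neg_ofReal_mul_le {ξ c : ℝ} {s : ℂ} (hξ : 0 ≤ ξ) (hs : c ≤ s.re) :
    ‖cexp (-(ξ * s))‖ ≤ Real.exp (-(c * ξ)) := by
  rw [Complex.norm_exp, neg_re, re_ofReal_mul, Real.exp_le_exp, neg_le_neg_iff, mul_comm c]
  exact mul_le_mul_of_nonneg_left hs hξ

lemma norm_cexp_neg_ofReal_mul_mul_le {ξ c : ℝ} {s : ℂ} (hξ : 0 ≤ ξ) (hc : 0 < c)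
    (hs : c ≤ s.re) : ‖cexp (-(ξ * s))‖ * ξ ≤ (c / 2)⁻¹ * Real.exp (-(c / 2 * ξ)) :=
  calc ‖cexp (-(ξ * s))‖ * ξ ≤ Real.exp (-(c * ξ)) * ξ := by
        gcongr; exact norm_cexp_neg_ofReal_mul_le hξ hs
    _ = ξ * Real.exp (-(c / 2 * ξ)) * Real.exp (-(c / 2 * ξ)) := by
        rw [mul_assoc, ← Real.exp_add]; ring_nf
    _ ≤ (c / 2)⁻¹ * Real.exp (-(c / 2 * ξ)) := by
        gcongr; exact mul_exp_neg_mul_le_inv (half_pos hc) ξ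

variable {μ : Measure ℝ} {f : ℝ → ℂ}

lemma aestronglyMeasurable_of_integrable_exp_neg_smul {c : ℝ}
    (hf : Integrable (fun ξ => Real.exp (-(c * ξ)) • f ξ) μ) : AEStronglyMeasurable f μ := by
  refine ((Real.continuous_exp.comp (continuous_const_mul c)).aestronglyMeasurable.smul
    hf.1).congr (.of_forall fun ξ => ?_)
  simp only [Function.comp_apply, Pi.smul_apply', smul_smul, ← Real.exp_add, add_neg_cancel,
    Real.exp_zero, one_smul]

theorem differentiableOn_laplaceTransform (hμ : ∀ᵐ ξ ∂μ, 0 ≤ ξ)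
    (hf : ∀ c : ℝ, 0 < c → Integrable (fun ξ => Real.exp (-(c * ξ)) • f ξ) μ) :
    DifferentiableOn ℂ (laplaceTransform μ f) {s | 0 < s.re} := by
  intro s₀ (hs₀ : 0 < s₀.re)
  set c := s₀.re / 2 with hc_def
  have hc : 0 < c := half_pos hs₀
  have hre : ∀ s ∈ Metric.ball s₀ c, c ≤ s.re := fun s hs => by
    have := (abs_re_le_norm (s - s₀)).trans (mem_ball_iff_norm.mp hs).le
    rw [sub_re, abs_le] at this
    linarith
  have hf_meas := aestronglyMeasurable_of_integrable_exp_neg_smul (hf 1 one_pos)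
  have hF_meas : ∀ s : ℂ, AEStronglyMeasurable (fun ξ : ℝ => cexp (-(ξ * s)) * f ξ) μ := fun s =>
    (by fun_prop : Continuous fun ξ : ℝ => cexp (-(ξ * s))).aestronglyMeasurable.mul hf_meas
  have hF_int : Integrable (fun ξ : ℝ => cexp (-(ξ * s₀)) * f ξ) μ := by
    refine (hf c hc).norm.mono' (hF_meas s₀) ?_
    filter_upwards [hμ] with ξ hξ
    rw [norm_mul, norm_smul, Real.norm_of_nonneg (Real.exp_pos _).le]
    gcongr
    exact norm_cexp_neg_ofReal_mul_le hξ (hre s₀ (Metric.mem_ball_self hc))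
  have hF'_meas : AEStronglyMeasurable (fun ξ : ℝ => cexp (-(ξ * s₀)) * -ξ * f ξ) μ :=
    (by fun_prop : Continuous fun ξ : ℝ => cexp (-(ξ * s₀)) * -ξ).aestronglyMeasurable.mul hf_meas
  have hF'_bound : ∀ᵐ (ξ : ℝ) ∂μ, ∀ s ∈ Metric.ball s₀ c,
      ‖cexp (-(ξ * s)) * -ξ * f ξ‖ ≤ (c / 2)⁻¹ * ‖Real.exp (-(c / 2 * ξ)) • f ξ‖ := by
    filter_upwards [hμ] with ξ hξ s hs
    rw [norm_mul, norm_mul, norm_neg, norm_smul, Complex.norm_real,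
      Real.norm_of_nonneg hξ, Real.norm_of_nonneg (Real.exp_pos _).le, ← mul_assoc _ (rexp _)]
    gcongr ?_ * _
    exact norm_cexp_neg_ofReal_mul_mul_le hξ hc (hre s hs)
  have hF'_deriv : ∀ᵐ (ξ : ℝ) ∂μ, ∀ s ∈ Metric.ball s₀ c,
      HasDerivAt (fun s => cexp (-(ξ * s)) * f ξ) (cexp (-(ξ * s)) * -ξ * f ξ) s :=
    .of_forall fun ξ s _ => by
      simpa using ((hasDerivAt_id s).const_mul (ξ : ℂ)).neg.cexp.mul_const (f ξ)
  exact (hasDerivAt_integral_of_dominated_loc_of_deriv_le (Metric.ball_mem_nhds s₀ hc)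
    (.of_forall hF_meas) hF_int hF'_meas hF'_bound ((hf (c / 2) (half_pos hc)).norm.const_mul _)
    hF'_deriv).2.differentiableAt.differentiableWithinAt

end LaplaceTransform

lemma ae_pos_mIoi : ∀ᵐ ξ ∂mIoi, 0 < ξ :=
  (withDensity_absolutelyContinuous _ _).ae_le (ae_restrict_mem measurableSet_Ioi)

lemma memLp_two_rpow_mul_exp_neg_mIoi {a c : ℝ} (ha : 0 < a) (hc : 0 < c) :
    MemLp (fun ξ : ℝ => ξ ^ a * Real.exp (-(c * ξ))) 2 mIoi := by
  have hmeas : Measurable fun ξ : ℝ => ξ ^ a * Real.exp (-(c * ξ)) := by fun_prop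
  rw [memLp_two_iff_integrable_sq hmeas.aestronglyMeasurable, mIoi, integrable_withDensity_iff
    measurable_inv.ennreal_ofReal (.of_forall fun _ => ENNReal.ofReal_lt_top)]
  refine (integrableOn_rpow_mul_exp_neg_mul_rpow (s := 2 * a - 1) (b := 2 * c)
    (by linarith) one_pos (by linarith)).congr ?_
  filter_upwards [ae_restrict_mem measurableSet_Ioi] with ξ (hξ : 0 < ξ)
  rw [ENNReal.toReal_ofReal (inv_pos.mpr hξ).le, Real.rpow_one, mul_pow, ← Real.rpow_natCast,
    ← Real.rpow_mul hξ.le, ← Real.exp_nat_mul, mul_right_comm, ← Real.rpow_neg_one,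
    ← Real.rpow_add hξ]
  congr 2 <;> push_cast <;> ring

lemma integrable_exp_neg_smul_rpow_mul_of_memLp {ν c : ℝ} (hν : 0 < ν) (hc : 0 < c)
    {φ : ℝ → ℂ} (hφ : MemLp φ 2 mIoi) :
    Integrable (fun ξ => Real.exp (-(c * ξ)) • (((ξ ^ ν : ℝ) : ℂ) * φ ξ)) mIoi := by
  refine (memLp_one_iff_integrable.mp
    (hφ.smul (memLp_two_rpow_mul_exp_neg_mIoi hν hc) (r := 1))).congr (.of_forall fun ξ => ?_)
  simp only [Pi.smul_apply', Complex.real_smul]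
  push_cast
  ring

lemma lag_zero {α : ℝ} (hα : Real.Gamma (α + 1) ≠ 0) (x : ℝ) : lag α 0 x = 1 := by
  simp [lag, hα]

lemma re_one_add_div_one_sub (z : ℂ) :
    ((1 + z) / (1 - z)).re = (1 - ‖z‖ ^ 2) / ‖1 - z‖ ^ 2 := by
  rw [Complex.div_re, ← add_div, Complex.sq_norm, Complex.sq_norm, Complex.normSq_apply,
    Complex.normSq_apply]
  congr 1
  simp only [add_re, add_im, sub_re, sub_im, one_re, one_im]
  ring

lemma re_one_add_div_one_sub_pos {z : ℂ} (hz : ‖z‖ < 1) : 0 < ((1 + z) / (1 - z)).re := by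
  rw [re_one_add_div_one_sub]
  have h_ne : 1 - z ≠ 0 := sub_ne_zero.mpr (by rintro rfl; simp at hz)
  have : 0 < ‖1 - z‖ := norm_pos_iff.mpr h_ne
  exact div_pos (by nlinarith [norm_nonneg z]) (by positivity)

lemma W_zero_eq_laplaceTransform {ν : ℝ} (hν : 0 < ν) (φ : ℝ → ℂ) (z : ℂ) :
    W ν 0 φ z = (Real.sqrt ((2 * ν - 1) / (π * Real.Gamma (2 * ν))) : ℂ) *
      (1 - z) ^ ((-(2 * ν) : ℝ) : ℂ) *
      laplaceTransform mIoi (fun ξ => ((ξ ^ ν : ℝ) : ℂ) * φ ξ) ((1 + z) / (1 - z) / 2) := by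
  have hlag : ∀ x, lag (2 * ν - 1) 0 x = 1 :=
    lag_zero (by rw [sub_add_cancel]; exact (Real.Gamma_pos_of_pos (by linarith)).ne')
  simp only [W, WKer, laplaceTransform, CharP.cast_eq_zero, sub_zero, hlag, Nat.factorial_zero,
    Nat.cast_one, mul_one, mul_zero, pow_zero, Complex.ofReal_one]
  congr 2 with ξ
  ring_nf

/-- for every `φ ∈ L²((0,∞), dξ/ξ)`, the second Bargmann transform
`W_{ν,0}[φ]` is holomorphic on the unit disk. -/
theorem stmt3 (ν : ℝ) (hν : 1 < 2*ν) (φ : ℝ → ℂ) (hφ : MeasureTheory.MemLp φ 2 mIoi) :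
    DifferentiableOn ℂ (W ν 0 φ) {z : ℂ | ‖z‖ < 1} := by
  have hν₀ : 0 < ν := by linarith
  rw [funext (W_zero_eq_laplaceTransform hν₀ φ)]
  have h_one_sub : ∀ z ∈ {z : ℂ | ‖z‖ < 1}, 0 < (1 - z).re := fun z (hz : ‖z‖ < 1) => by
    rw [sub_re, one_re]; linarith [re_le_norm z]
  have h_laplace := differentiableOn_laplaceTransform (ae_pos_mIoi.mono fun ξ hξ => hξ.le)
    fun c hc => integrable_exp_neg_smul_rpow_mul_of_memLp hν₀ hc hφ
  have h_cayley : DifferentiableOn ℂ (fun z : ℂ => (1 + z) / (1 - z) / 2) {z | ‖z‖ < 1} :=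
    fun z hz => ((((differentiableAt_const 1).add differentiableAt_id).div
      ((differentiableAt_const 1).sub differentiableAt_id)
      (fun h => by simpa [h] using h_one_sub z hz)).div_const 2).differentiableWithinAt
  refine ((differentiableOn_const _).mul fun z hz => ?_).mul
    (h_laplace.comp h_cayley fun z hz => ?_)
  · exact ((differentiableAt_const 1).sub differentiableAt_id).cpow (differentiableAt_const _)
      (Or.inl (h_one_sub z hz)) |>.differentiableWithinAt
  · simpa using div_pos (re_one_add_div_one_sub_pos hz) two_pos
end

section
/- For every k ∈ ℕ, the function φ_k^{ν,m} is smooth on 𝔻 and satisfies the eigenvalue equation H_ν φ_k^{ν,m} = 4m(2ν−m−1) φ_k^{ν,m} pointwise on 𝔻, where H_ν = −4(1−|z|²)[(1−|z|²) ∂²/∂z∂\bar z − 2ν \bar z ∂/∂\bar z]. -/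
open MeasureTheory Complex Real Set

namespace Stmt7Aux

open Polynomial


/-- coefficient of `X^s (1-X)^(n-s)` in `P_n^{(a,b)}(1-2t)` -/
noncomputable def Bc (a b : ℝ) (n s : ℕ) : ℝ :=
  if s ≤ n then
    (-1)^s * (Real.Gamma (n + a + 1) / (Real.Gamma (a + s + 1) * (Nat.factorial (n - s)))) *
      (Real.Gamma (n + b + 1) / (Real.Gamma (n + b - s + 1) * (Nat.factorial s)))
  else 0

def muc (a : ℝ) (s : ℕ) : ℝ := s * (s + a)
def lamc (b : ℝ) (n s : ℕ) : ℝ := ((n:ℝ) - s) * ((n:ℝ) - s + b)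

lemma ratio {a b : ℝ} (ha : 0 ≤ a) (hb : 0 < b) (n s : ℕ) :
    Bc a b n (s+1) * muc a (s+1) = -(Bc a b n s * lamc b n s) := by
  rcases lt_or_ge s n with hs | hs
  · have hs1 : s + 1 ≤ n := hs
    have hga : Real.Gamma (a + ↑(s+1) + 1) = (a + s + 1) * Real.Gamma (a + s + 1) := by
      have : a + ↑(s+1) + 1 = (a + s + 1) + 1 := by push_cast; ring
      rw [this, Real.Gamma_add_one (by positivity)]
    have hfact : (Nat.factorial (n - s)) = (n - s) * Nat.factorial (n - (s+1)) := by
      have : n - s = (n - (s+1)) + 1 := by omega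
      rw [this, Nat.factorial_succ]
    have hargs : (n:ℝ) + b - ↑(s+1) + 1 = (n:ℝ) + b - s := by push_cast; ring
    have hns' : (s:ℝ) + 1 ≤ (n:ℝ) := by exact_mod_cast hs
    have hnbs : (0:ℝ) < (n:ℝ) + b - s := by nlinarith
    have hgb : Real.Gamma ((n:ℝ) + b - s + 1) = ((n:ℝ) + b - s) * Real.Gamma ((n:ℝ) + b - s) := by
      rw [Real.Gamma_add_one (ne_of_gt hnbs)]
    have hg1 : Real.Gamma (a + s + 1) ≠ 0 := ne_of_gt (Real.Gamma_pos_of_pos (by positivity))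
    have hg2 : Real.Gamma ((n:ℝ) + b - s) ≠ 0 := ne_of_gt (Real.Gamma_pos_of_pos hnbs)
    have hf1 : (Nat.factorial (n - (s+1)) : ℝ) ≠ 0 := Nat.cast_ne_zero.mpr (Nat.factorial_ne_zero _)
    have hf2 : (Nat.factorial s : ℝ) ≠ 0 := Nat.cast_ne_zero.mpr (Nat.factorial_ne_zero _)
    have hcast : ((n:ℝ) - s) = ((n - s : ℕ) : ℝ) := by
      rw [Nat.cast_sub (le_of_lt hs)]
    unfold Bc muc lamc
    rw [if_pos hs1, if_pos (le_of_lt hs)]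
    rw [hga, hargs, hgb, hfact]
    have hns : (1:ℝ) ≤ (n:ℝ) - s := by
      rw [hcast]; exact_mod_cast Nat.one_le_iff_ne_zero.mpr (by omega)
    push_cast [hcast]
    have h1 : Nat.factorial (s+1) = (s+1) * Nat.factorial s := Nat.factorial_succ s
    push_cast [h1]
    have hA : ((n:ℝ) + b - s) ≠ 0 := ne_of_gt hnbs
    have hB : ((n:ℝ) - s) ≠ 0 := by intro h; nlinarith
    simp only [hcast.symm]
    have hC : (a + (s:ℝ) + 1) ≠ 0 := by positivity
    have hD : ((s:ℝ) + 1) ≠ 0 := by positivity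
    field_simp
    ring
  · -- s ≥ n : both sides vanish
    rcases eq_or_lt_of_le hs with he | hl
    · subst he
      unfold Bc lamc muc
      rw [if_neg (by omega)]
      simp
    · unfold Bc
      rw [if_neg (by omega), if_neg (by omega)]
      simp



lemma hXpow (i : ℕ) : (C (i:ℝ)) * (X * X^(i-1)) = C (i:ℝ) * X^i := by
  cases i with
  | zero => simp
  | succ j => rw [← pow_succ']; norm_num

lemma hYpow (j : ℕ) : (C (j:ℝ)) * ((1-X) * (1-X)^(j-1)) = C (j:ℝ) * (1-X:ℝ[X])^j := by
  cases j with
  | zero => simp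
  | succ i => rw [← pow_succ']; norm_num

lemma deriv1 (i j : ℕ) :
    derivative ((X:ℝ[X])^i * (1-X)^j) =
      C (i:ℝ) * X^(i-1) * (1-X)^j - C (j:ℝ) * X^i * (1-X)^(j-1) := by
  rw [derivative_mul, derivative_X_pow, derivative_pow]
  simp only [derivative_sub, derivative_one, derivative_X, zero_sub]
  ring

lemma d1 (i j : ℕ) :
    X * (1-X) * derivative ((X:ℝ[X])^i * (1-X)^j) =
      C (i:ℝ) * (X^i * (1-X)^(j+1)) - C (j:ℝ) * (X^(i+1) * (1-X)^j) := by
  rw [deriv1]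
  have h1 := hXpow i
  have h2 := hYpow j
  calc X * (1-X) * (C (i:ℝ) * X^(i-1) * (1-X)^j - C (j:ℝ) * X^i * (1-X)^(j-1))
      = (C (i:ℝ) * (X * X^(i-1))) * (1-X)^(j+1) - (C (j:ℝ) * ((1-X) * (1-X)^(j-1))) * X^(i+1) := by
        ring
    _ = (C (i:ℝ) * X^i) * (1-X)^(j+1) - (C (j:ℝ) * (1-X)^j) * X^(i+1) := by rw [h1, h2]
    _ = C (i:ℝ) * (X^i * (1-X)^(j+1)) - C (j:ℝ) * (X^(i+1) * (1-X)^j) := by ring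

lemma d2 (i j : ℕ) :
    X^2 * (1-X)^2 * derivative (derivative ((X:ℝ[X])^i * (1-X)^j)) =
      (C (i:ℝ) * (C (i:ℝ) - 1)) * (X^i * (1-X)^(j+2))
      - (2 * C (i:ℝ) * C (j:ℝ)) * (X^(i+1) * (1-X)^(j+1))
      + (C (j:ℝ) * (C (j:ℝ) - 1)) * (X^(i+2) * (1-X)^j) := by
  have dXY : derivative (X*(1-X) : ℝ[X]) = 1 - 2*X := by
    simp only [derivative_mul, derivative_sub, derivative_one, derivative_X]
    ring
  have h0 : ∀ p : ℝ[X], (X:ℝ[X])^2*(1-X)^2 * derivative p =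
      X*(1-X) * derivative (X*(1-X)*p) - (1-2*X) * (X*(1-X)*p) := by
    intro p
    rw [derivative_mul, dXY]
    ring
  rw [h0, d1 i j]
  rw [derivative_sub, derivative_C_mul, derivative_C_mul]
  have e1 := d1 i (j+1)
  have e2 := d1 (i+1) j
  simp only [Nat.cast_add, Nat.cast_one, map_add, map_one] at e1 e2 ⊢
  linear_combination (C (i:ℝ)) * e1 - (C (j:ℝ)) * e2




lemma bracket (a b : ℝ) (n i : ℕ) (hin : i ≤ n) :
    X^2*(1-X)^2 * derivative (derivative ((X:ℝ[X])^i * (1-X)^(n-i)))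
    + (C (a+1) - C (a+b+2) * X) * (X*(1-X) * derivative ((X:ℝ[X])^i * (1-X)^(n-i)))
    + C ((n:ℝ)*((n:ℝ)+a+b+1)) * (X*(1-X) * ((X:ℝ[X])^i * (1-X)^(n-i)))
    = C (muc a i) * (X^i * (1-X)^(n-i+2))
      + C (muc a i + lamc b n i) * (X^(i+1) * (1-X)^(n-i+1))
      + C (lamc b n i) * (X^(i+2) * (1-X)^(n-i)) := by
  obtain ⟨j, rfl⟩ : ∃ j, n = i + j := ⟨n - i, by omega⟩
  have hji : i + j - i = j := by omega
  rw [hji, d2, d1]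
  have hc : ((i+j : ℕ):ℝ) = (i:ℝ) + (j:ℝ) := by push_cast; ring
  unfold muc lamc
  rw [hc]
  have h1 : (i:ℝ) + (j:ℝ) - (i:ℝ) = (j:ℝ) := by ring
  rw [h1]
  simp only [map_mul, map_add, map_sub, map_one, map_ofNat, map_natCast]
  have hXY : X*(1-X) * ((X:ℝ[X])^i * (1-X)^j) = X^(i+1) * (1-X)^(j+1) := by ring
  rw [hXY]
  ring

noncomputable def Dt (a b : ℝ) (n s : ℕ) : ℝ[X] :=
  C (Bc a b n s * lamc b n s) * (X^(s+1) * (1-X)^(n-s+1))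
noncomputable def Et (a b : ℝ) (n s : ℕ) : ℝ[X] :=
  C (Bc a b n s * muc a s) * (X^(s+1) * (1-X)^(n-s+1))
noncomputable def Ht (a b : ℝ) (n s : ℕ) : ℝ[X] :=
  if s = 0 then 0 else Dt a b n (s-1) - Et a b n s

lemma step {a b : ℝ} (ha : 0 ≤ a) (hb : 0 < b) (n s : ℕ) (hs : s ≤ n) :
    C (Bc a b n s) * (C (muc a s) * (X^s * (1-X)^(n-s+2))
      + C (muc a s + lamc b n s) * (X^(s+1) * (1-X)^(n-s+1))
      + C (lamc b n s) * (X^(s+2) * (1-X)^(n-s)))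
    = Ht a b n (s+1) - Ht a b n s := by
  have hratio := ratio ha hb n s
  have hHt1 : Ht a b n (s+1) = Dt a b n s - Et a b n (s+1) := by
    unfold Ht; rw [if_neg (by omega)]; norm_num
  have hEt1 : Et a b n (s+1) = - (C (Bc a b n s * lamc b n s) * (X^(s+2) * (1-X)^(n-s))) := by
    unfold Et
    rw [hratio]
    rcases eq_or_lt_of_le hs with he | hlt
    · subst he
      have : lamc b s s = 0 := by unfold lamc; simp
      rw [this]
      simp
    · have : s + 1 + 1 = s + 2 := by omega
      rw [this]
      have : n - (s+1) + 1 = n - s := by omega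
      rw [this]
      simp [map_neg]
  rw [hHt1, hEt1]
  unfold Dt
  rcases Nat.eq_zero_or_pos s with h0 | hpos
  · subst h0
    have hmu : muc a 0 = 0 := by unfold muc; simp
    unfold Ht
    rw [if_pos rfl, hmu]
    simp only [map_mul, map_add, map_zero]
    ring
  · have hs1 : s ≠ 0 := by omega
    unfold Ht
    rw [if_neg hs1]
    have hratio2 := ratio ha hb n (s-1)
    have hss : s - 1 + 1 = s := by omega
    rw [hss] at hratio2
    unfold Dt Et
    rw [show Bc a b n (s-1) * lamc b n (s-1) = -(Bc a b n s * muc a s) by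
      rw [hratio2]; ring]
    have he1 : s - 1 + 1 = s := hss
    have he2 : n - (s-1) + 1 = n - s + 2 := by omega
    rw [he1, he2]
    simp only [map_mul, map_add, map_neg]
    ring

noncomputable def Pj (a b : ℝ) (n : ℕ) : ℝ[X] :=
  ∑ s ∈ Finset.range (n+1), C (Bc a b n s) * (X^s * (1-X)^(n-s))

lemma jacODE {a b : ℝ} (ha : 0 ≤ a) (hb : 0 < b) (n : ℕ) :
    X*(1-X) * derivative (derivative (Pj a b n))
      + (C (a+1) - C (a+b+2) * X) * derivative (Pj a b n)
      + C ((n:ℝ)*((n:ℝ)+a+b+1)) * Pj a b n = 0 := by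
  have hXY : (X*(1-X) : ℝ[X]) ≠ 0 := by
    intro h
    have := congrArg (eval (1/2)) h
    simp at this
    norm_num at this
  apply mul_left_cancel₀ hXY
  rw [mul_zero]
  have hP : derivative (Pj a b n) = ∑ s ∈ Finset.range (n+1), C (Bc a b n s) * derivative ((X:ℝ[X])^s * (1-X)^(n-s)) := by
    unfold Pj
    rw [map_sum]
    exact Finset.sum_congr rfl (fun s _ => derivative_C_mul _ _)
  have hP2 : derivative (derivative (Pj a b n)) = ∑ s ∈ Finset.range (n+1), C (Bc a b n s) * derivative (derivative ((X:ℝ[X])^s * (1-X)^(n-s))) := by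
    rw [hP, map_sum]
    exact Finset.sum_congr rfl (fun s _ => derivative_C_mul _ _)
  rw [hP2, hP]
  unfold Pj
  rw [mul_add, mul_add, mul_add, mul_add, mul_add]
  rw [Finset.mul_sum, Finset.mul_sum, Finset.mul_sum, Finset.mul_sum, Finset.mul_sum, Finset.mul_sum]
  rw [← Finset.sum_add_distrib, ← Finset.sum_add_distrib]
  have : ∀ s ∈ Finset.range (n+1),
      X*(1-X) * (X*(1-X) * (C (Bc a b n s) * derivative (derivative ((X:ℝ[X])^s * (1-X)^(n-s)))))
      + X*(1-X) * ((C (a+1) - C (a+b+2) * X) * (C (Bc a b n s) * derivative ((X:ℝ[X])^s * (1-X)^(n-s))))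
      + X*(1-X) * (C ((n:ℝ)*(n:ℝ) + (n:ℝ)*a + (n:ℝ)*b + (n:ℝ)*1) * (C (Bc a b n s) * (X^s * (1-X)^(n-s))))
      = Ht a b n (s+1) - Ht a b n s := by
    intro s hsmem
    rw [show C ((n:ℝ)*(n:ℝ) + (n:ℝ)*a + (n:ℝ)*b + (n:ℝ)*1) = C ((n:ℝ)*((n:ℝ)+a+b+1)) from congrArg C (by ring)]
    have hs : s ≤ n := by
      have := Finset.mem_range.mp hsmem; omega
    rw [← step ha hb n s hs, ← bracket a b n s hs]
    ring
  rw [Finset.sum_congr rfl this, Finset.sum_range_sub]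
  have h0 : Ht a b n 0 = 0 := by unfold Ht; rw [if_pos rfl]
  have h1 : Ht a b n (n+1) = 0 := by
    unfold Ht Dt Et
    rw [if_neg (by omega)]
    have : n + 1 - 1 = n := by omega
    rw [this]
    have hl : lamc b n n = 0 := by unfold lamc; simp
    have hB : Bc a b n (n+1) = 0 := by unfold Bc; rw [if_neg (by omega)]
    rw [hl, hB]
    simp
  rw [h0, h1, sub_zero]



noncomputable def gF (a b : ℝ) (n m : ℕ) (t : ℝ) : ℝ := ((1-t)^m)⁻¹ * (Pj a b n).eval t
noncomputable def gF1 (a b : ℝ) (n m : ℕ) (t : ℝ) : ℝ :=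
  (m:ℝ) * ((1-t)^(m+1))⁻¹ * (Pj a b n).eval t
    + ((1-t)^m)⁻¹ * (derivative (Pj a b n)).eval t
noncomputable def gF2 (a b : ℝ) (n m : ℕ) (t : ℝ) : ℝ :=
  (m:ℝ) * ((m:ℝ)+1) * ((1-t)^(m+2))⁻¹ * (Pj a b n).eval t
    + 2*(m:ℝ) * ((1-t)^(m+1))⁻¹ * (derivative (Pj a b n)).eval t
    + ((1-t)^m)⁻¹ * (derivative (derivative (Pj a b n))).eval t

lemma hd_inv_pow (p : ℝ[X]) (j : ℕ) {t : ℝ} (ht : t < 1) :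
    HasDerivAt (fun t => ((1-t)^j)⁻¹ * p.eval t)
      ((j:ℝ) * ((1-t)^(j+1))⁻¹ * p.eval t + ((1-t)^j)⁻¹ * p.derivative.eval t) t := by
  have h1t : (1 - t) ≠ 0 := by intro h; nlinarith
  have h1 : HasDerivAt (fun t : ℝ => 1 - t) (-1) t := by
    simpa using ((hasDerivAt_id t).const_sub 1)
  have h2 : HasDerivAt (fun t : ℝ => (1-t)^j) ((j:ℝ)*(1-t)^(j-1)*(-1)) t := h1.pow j
  have h3 := h2.inv (pow_ne_zero j h1t)
  have h4 := h3.mul (p.hasDerivAt t)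
  refine h4.congr_deriv ?_
  have hco : -((j:ℝ)*(1-t)^(j-1)*(-1)) / ((1-t)^j)^2 = (j:ℝ) * ((1-t)^(j+1))⁻¹ := by
    cases j with
    | zero => simp
    | succ i =>
      rw [Nat.succ_sub_one]
      rw [show (((1-t)^(i+1))^2 : ℝ) = (1-t)^i * (1-t)^(i+2) by ring]
      have hne1 : ((1-t):ℝ)^i ≠ 0 := pow_ne_zero _ h1t
      have hne2 : ((1-t):ℝ)^(i+2) ≠ 0 := pow_ne_zero _ h1t
      field_simp
  rw [hco]; rfl

lemma hasDerivAt_gF (a b : ℝ) (n m : ℕ) {t : ℝ} (ht : t < 1) :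
    HasDerivAt (gF a b n m) (gF1 a b n m t) t := by
  unfold gF gF1
  exact hd_inv_pow (Pj a b n) m ht

lemma hasDerivAt_gF1 (a b : ℝ) (n m : ℕ) {t : ℝ} (ht : t < 1) :
    HasDerivAt (gF1 a b n m) (gF2 a b n m t) t := by
  have h1 := (hd_inv_pow (Pj a b n) (m+1) ht).const_mul (m:ℝ)
  have h2 := hd_inv_pow (derivative (Pj a b n)) m ht
  have h3 := h1.add h2
  have hfe : (fun x : ℝ => (m:ℝ) * (((1 - x)^(m+1))⁻¹ * eval x (Pj a b n))
      + ((1 - x)^m)⁻¹ * eval x (derivative (Pj a b n))) = gF1 a b n m := by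
    funext x; unfold gF1; ring
  rw [← hfe]
  refine h3.congr_deriv ?_
  unfold gF2
  push_cast
  ring

lemma gODE (a ν : ℝ) (n m q : ℕ) (ha : 0 ≤ a) (hb : 0 < 2*(ν-(m:ℝ))-1)
    (hkey : (n:ℝ)*((n:ℝ)+a+(2*(ν-(m:ℝ))-1)+1) + 2*ν*(q:ℝ) - (a+1)*(m:ℝ)
      = (m:ℝ)*(2*ν-(m:ℝ)-1))
    {t : ℝ} (ht : t < 1) :
    -(1-t) * ((1-t) * (t * gF2 a (2*(ν-(m:ℝ))-1) n m t + (a+1) * gF1 a (2*(ν-(m:ℝ))-1) n m t)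
        - 2*ν*(t * gF1 a (2*(ν-(m:ℝ))-1) n m t + (q:ℝ) * gF a (2*(ν-(m:ℝ))-1) n m t))
      = (m:ℝ)*(2*ν-(m:ℝ)-1) * gF a (2*(ν-(m:ℝ))-1) n m t := by
  set b := 2*(ν-(m:ℝ))-1 with hbdef
  have hs : (1-t) ≠ 0 := by intro h; nlinarith
  have hJ := congrArg (eval t) (jacODE ha hb n)
  simp only [eval_add, eval_mul, eval_sub, eval_one, eval_X, eval_C, eval_zero] at hJ
  have hR1 : ((1-t)^(m+1))⁻¹ * (1-t) = ((1-t)^m)⁻¹ := by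
    rw [pow_succ]
    field_simp
  have hR2 : ((1-t)^(m+2))⁻¹ * (1-t) = ((1-t)^(m+1))⁻¹ := by
    rw [show m+2 = (m+1)+1 from rfl, pow_succ]
    field_simp
  unfold gF gF1 gF2
  linear_combination (-(1-t) * ((1-t)^m)⁻¹) * hJ
    + ((1-t) * ((1-t)^m)⁻¹ * (Pj a b n).eval t) * hkey
    + (-(t*(m:ℝ)*((m:ℝ)+1)*((Pj a b n).eval t))*(1-t)) * hR2
    + (-(t*(m:ℝ)*((m:ℝ)+1)*((Pj a b n).eval t))
        + (-2*(m:ℝ)*(1-t)*t*((derivative (Pj a b n)).eval t)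
           - (a+1)*(m:ℝ)*(1-t)*((Pj a b n).eval t)
           + 2*ν*t*(m:ℝ)*((Pj a b n).eval t))) * hR1



lemma hasFDerivAt_normSq (z : ℂ) :
    HasFDerivAt Complex.normSq
      ((2*z.re) • Complex.reCLM + (2*z.im) • Complex.imCLM) z := by
  have h1 : HasFDerivAt (fun w : ℂ => w.re * w.re + w.im * w.im)
      ((z.re • Complex.reCLM + z.re • Complex.reCLM) +
        (z.im • Complex.imCLM + z.im • Complex.imCLM)) z := by
    exact (((Complex.reCLM.hasFDerivAt (x := z)).mul (Complex.reCLM.hasFDerivAt)).add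
      ((Complex.imCLM.hasFDerivAt (x := z)).mul (Complex.imCLM.hasFDerivAt)))
  have he : (fun w : ℂ => w.re * w.re + w.im * w.im) = Complex.normSq := by
    funext w; simp [Complex.normSq_apply]
  rw [he] at h1
  convert h1 using 1
  ext v <;> simp [two_mul] <;> ring

variable {hfun : ℝ → ℝ} {h' : ℝ} {z : ℂ}

lemma masterF (p q : ℕ) (hh : HasDerivAt hfun h' (Complex.normSq z)) :
    HasFDerivAt (fun w : ℂ => w^p * (starRingEnd ℂ w)^q * ((hfun (Complex.normSq w) : ℝ) : ℂ))
      ((z^p * (starRingEnd ℂ z)^q) •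
          (Complex.ofRealCLM.comp ((h' • ((2*z.re) • Complex.reCLM + (2*z.im) • Complex.imCLM))))
        + ((hfun (Complex.normSq z) : ℝ) : ℂ) •
          ((z^p) • (((ContinuousLinearMap.smulRight (1 : ℂ →L[ℂ] ℂ) ((q:ℂ) * (starRingEnd ℂ z)^(q-1))).restrictScalars ℝ).comp
              (Complex.conjCLE.toContinuousLinearMap))
            + ((starRingEnd ℂ z)^q) • ((ContinuousLinearMap.smulRight (1 : ℂ →L[ℂ] ℂ) ((p:ℂ) * z^(p-1))).restrictScalars ℝ))) z := by
  have h1 : HasFDerivAt (fun w : ℂ => w^p)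
      ((ContinuousLinearMap.smulRight (1 : ℂ →L[ℂ] ℂ) ((p:ℂ) * z^(p-1))).restrictScalars ℝ) z :=
    (hasDerivAt_pow p z).hasFDerivAt.restrictScalars ℝ
  have h2 : HasFDerivAt (fun w : ℂ => (starRingEnd ℂ w)^q)
      (((ContinuousLinearMap.smulRight (1 : ℂ →L[ℂ] ℂ) ((q:ℂ) * (starRingEnd ℂ z)^(q-1))).restrictScalars ℝ).comp
        (Complex.conjCLE.toContinuousLinearMap)) z := by
    have := ((hasDerivAt_pow q ((starRingEnd ℂ) z)).hasFDerivAt.restrictScalars ℝ).comp z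
      (Complex.conjCLE.hasFDerivAt (x := z))
    exact this
  have h3 := hasFDerivAt_normSq z
  have h4 : HasFDerivAt (fun w : ℂ => ((hfun (Complex.normSq w) : ℝ) : ℂ))
      (Complex.ofRealCLM.comp (h' • ((2*z.re) • Complex.reCLM + (2*z.im) • Complex.imCLM))) z := by
    have hcomp := (hh.hasFDerivAt.comp z h3)
    have := Complex.ofRealCLM.hasFDerivAt.comp z hcomp
    refine this.congr_fderiv ?_
    ext v
    simp [Function.comp_def]
    try ring
  have := (h1.mul h2).mul h4
  exact this


lemma wirtZbar_masterF (p q : ℕ) (hh : HasDerivAt hfun h' (Complex.normSq z)) :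
    wirtZbar (fun w : ℂ => w^p * (starRingEnd ℂ w)^q * ((hfun (Complex.normSq w) : ℝ) : ℂ)) z
      = (q:ℂ) * z^p * (starRingEnd ℂ z)^(q-1) * ((hfun (Complex.normSq z) : ℝ) : ℂ)
        + z^(p+1) * (starRingEnd ℂ z)^q * (h' : ℂ) := by
  rw [wirtZbar, (masterF p q hh).fderiv]
  simp only [ContinuousLinearMap.add_apply, ContinuousLinearMap.smul_apply,
    ContinuousLinearMap.coe_comp', Function.comp_apply, ContinuousLinearMap.coe_restrictScalars',
    ContinuousLinearMap.smulRight_apply, ContinuousLinearMap.one_apply,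
    ContinuousLinearEquiv.coe_coe, Complex.conjCLE_apply, Complex.ofRealCLM_apply,
    Complex.reCLM_apply, Complex.imCLM_apply, smul_eq_mul, map_one, Complex.I_re, Complex.I_im]
  simp only [Complex.one_re, Complex.one_im, Complex.conj_I, mul_zero, mul_one, add_zero, zero_add]
  push_cast
  have h1 : (z.re : ℂ) + (z.im : ℂ) * Complex.I = z := Complex.re_add_im z
  have h2 : Complex.I * Complex.I = -1 := Complex.I_mul_I
  linear_combination (z^p * (starRingEnd ℂ z)^q * (h':ℂ)) * h1 +
    (((hfun (Complex.normSq z) : ℂ) * p * z^(p-1) * (starRingEnd ℂ z)^q -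
      (hfun (Complex.normSq z) : ℂ) * q * z^p * (starRingEnd ℂ z)^(q-1))/2) * h2

lemma wirtZ_masterF (p q : ℕ) (hh : HasDerivAt hfun h' (Complex.normSq z)) :
    wirtZ (fun w : ℂ => w^p * (starRingEnd ℂ w)^q * ((hfun (Complex.normSq w) : ℝ) : ℂ)) z
      = (p:ℂ) * z^(p-1) * (starRingEnd ℂ z)^q * ((hfun (Complex.normSq z) : ℝ) : ℂ)
        + z^p * (starRingEnd ℂ z)^(q+1) * (h' : ℂ) := by
  rw [wirtZ, (masterF p q hh).fderiv]
  simp only [ContinuousLinearMap.add_apply, ContinuousLinearMap.smul_apply,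
    ContinuousLinearMap.coe_comp', Function.comp_apply, ContinuousLinearMap.coe_restrictScalars',
    ContinuousLinearMap.smulRight_apply, ContinuousLinearMap.one_apply,
    ContinuousLinearEquiv.coe_coe, Complex.conjCLE_apply, Complex.ofRealCLM_apply,
    Complex.reCLM_apply, Complex.imCLM_apply, smul_eq_mul, map_one, Complex.I_re, Complex.I_im]
  simp only [Complex.one_re, Complex.one_im, Complex.conj_I, mul_zero, mul_one, add_zero, zero_add]
  push_cast
  have h1 : (z.re : ℂ) - (z.im : ℂ) * Complex.I = (starRingEnd ℂ) z := by
    simp [Complex.ext_iff]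
  have h2 : Complex.I * Complex.I = -1 := Complex.I_mul_I
  linear_combination (z^p * (starRingEnd ℂ z)^q * (h':ℂ)) * h1 +
    (((hfun (Complex.normSq z) : ℂ) * q * z^p * (starRingEnd ℂ z)^(q-1) -
      (hfun (Complex.normSq z) : ℂ) * p * z^(p-1) * (starRingEnd ℂ z)^q)/2) * h2



lemma eval_Pj (a b : ℝ) (n : ℕ) (t : ℝ) : (Pj a b n).eval t = jac a b n (1 - 2*t) := by
  unfold Pj jac
  rw [eval_finset_sum]
  refine Finset.sum_congr rfl (fun s hs => ?_)
  have hsn : s ≤ n := by have := Finset.mem_range.mp hs; omega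
  simp only [eval_mul, eval_C, eval_pow, eval_X, eval_sub, eval_one]
  unfold Bc
  rw [if_pos hsn]
  rw [show ((1 - 2*t - 1))/2 = -t by ring, show (1 - 2*t + 1)/2 = 1 - t by ring]
  rw [neg_pow]
  ring

lemma phiE_eq_left (ν : ℝ) (m k : ℕ) (hk : k ≤ m) :
    phiE ν m k = fun z : ℂ => ((-1:ℂ))^k *
      (z^0 * (starRingEnd ℂ z)^(m-k) *
        ((gF ((m-k : ℕ):ℝ) (2*(ν - m) - 1) k m (Complex.normSq z) : ℝ) : ℂ)) := by
  funext z
  unfold phiE gF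
  rw [min_eq_right hk, max_eq_left hk, if_pos hk, eval_Pj]
  rw [show (1 - 2 * Complex.normSq z) = 1 - 2 * ‖z‖ ^ 2 by rw [Complex.sq_norm]]
  rw [show ((1 - Complex.normSq z)^m : ℝ) = ((1 - ‖z‖ ^ 2)^m : ℝ) by rw [Complex.sq_norm]]
  push_cast
  ring

lemma phiE_eq_right (ν : ℝ) (m k : ℕ) (hk : ¬ (k ≤ m)) :
    phiE ν m k = fun z : ℂ => ((-1:ℂ))^m *
      (z^(k-m) * (starRingEnd ℂ z)^0 *
        ((gF ((k-m : ℕ):ℝ) (2*(ν - m) - 1) m m (Complex.normSq z) : ℝ) : ℂ)) := by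
  funext z
  have hk' : m ≤ k := by omega
  unfold phiE gF
  rw [min_eq_left hk', max_eq_right hk', if_neg hk, eval_Pj]
  rw [show (1 - 2 * Complex.normSq z) = 1 - 2 * ‖z‖ ^ 2 by rw [Complex.sq_norm]]
  rw [show ((1 - Complex.normSq z)^m : ℝ) = ((1 - ‖z‖ ^ 2)^m : ℝ) by rw [Complex.sq_norm]]
  push_cast
  ring

lemma contDiff_eval (p : ℝ[X]) : ContDiff ℝ (⊤ : ℕ∞) fun x : ℝ => p.eval x := by
  have h : (fun x : ℝ => p.eval x)
      = fun x => ∑ i ∈ Finset.range (p.natDegree + 1), p.coeff i * x^i := by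
    funext x; rw [Polynomial.eval_eq_sum_range]
  rw [h]
  apply ContDiff.sum
  intro i _
  exact contDiff_const.mul (contDiff_id.pow i)

lemma contDiff_normSq : ContDiff ℝ (⊤ : ℕ∞) Complex.normSq := by
  have h : (Complex.normSq : ℂ → ℝ) = fun z => z.re*z.re + z.im*z.im := by
    funext w; simp [Complex.normSq_apply]
  rw [h]
  exact (Complex.reCLM.contDiff.mul Complex.reCLM.contDiff).add
    (Complex.imCLM.contDiff.mul Complex.imCLM.contDiff)

lemma contDiffAt_gF (a b : ℝ) (n m : ℕ) {t : ℝ} (ht : t < 1) :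
    ContDiffAt ℝ (⊤ : ℕ∞) (gF a b n m) t := by
  have h1 : ContDiffAt ℝ (⊤ : ℕ∞) (fun t : ℝ => ((1-t)^m)) t :=
    ((contDiff_const.sub contDiff_id).pow m).contDiffAt
  have h2 := h1.inv (pow_ne_zero m (by intro h; nlinarith))
  exact h2.mul (contDiff_eval _).contDiffAt

lemma contDiffOn_WF (c : ℂ) (p q : ℕ) (a b : ℝ) (n m : ℕ) :
    ContDiffOn ℝ (⊤ : ℕ∞) (fun w : ℂ => c * (w^p * (starRingEnd ℂ w)^q *
        ((gF a b n m (Complex.normSq w) : ℝ) : ℂ))) {z : ℂ | ‖z‖ < 1} := by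
  intro z hz
  apply ContDiffAt.contDiffWithinAt
  have ht : Complex.normSq z < 1 := by
    rw [← Complex.sq_norm]
    have : ‖z‖ < 1 := hz
    nlinarith [norm_nonneg z]
  have hgf : ContDiffAt ℝ (⊤ : ℕ∞) (fun w : ℂ => ((gF a b n m (Complex.normSq w) : ℝ) : ℂ)) z :=
    Complex.ofRealCLM.contDiff.contDiffAt.comp z
      ((contDiffAt_gF a b n m ht).comp z contDiff_normSq.contDiffAt)
  have h1 : ContDiffAt ℝ (⊤ : ℕ∞) (fun w : ℂ => w^p) z :=
    (((contDiff_id.pow p : ContDiff ℂ (⊤ : ℕ∞) fun w : ℂ => w^p)).restrict_scalars ℝ).contDiffAt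
  have h2 : ContDiffAt ℝ (⊤ : ℕ∞) (fun w : ℂ => (starRingEnd ℂ w)^q) z := by
    have := ((((contDiff_id.pow q : ContDiff ℂ (⊤ : ℕ∞) fun w : ℂ => w^q)).restrict_scalars ℝ).comp
      (Complex.conjCLE.contDiff)).contDiffAt (x := z)
    simpa [Function.comp_def] using this
  exact contDiffAt_const.mul ((h1.mul h2).mul hgf)




lemma masterF_diff (p q : ℕ) (hh : HasDerivAt hfun h' (Complex.normSq z)) :
    DifferentiableAt ℝ
      (fun w : ℂ => w^p * (starRingEnd ℂ w)^q * ((hfun (Complex.normSq w) : ℝ) : ℂ)) z :=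
  (masterF p q hh).differentiableAt

lemma wirtZbar_cmul {G : ℂ → ℂ} {c z : ℂ} (hG : DifferentiableAt ℝ G z) :
    wirtZbar (fun w => c * G w) z = c * wirtZbar G z := by
  unfold wirtZbar
  rw [fderiv_const_mul hG]
  simp only [ContinuousLinearMap.smul_apply, smul_eq_mul]
  ring

lemma wirtZ_cmul {G : ℂ → ℂ} {c z : ℂ} (hG : DifferentiableAt ℝ G z) :
    wirtZ (fun w => c * G w) z = c * wirtZ G z := by
  unfold wirtZ
  rw [fderiv_const_mul hG]
  simp only [ContinuousLinearMap.smul_apply, smul_eq_mul]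
  ring

lemma wirtZ_cmul_add {A B : ℂ → ℂ} {c z : ℂ} (hA : DifferentiableAt ℝ A z)
    (hB : DifferentiableAt ℝ B z) :
    wirtZ (fun w => c * (A w + B w)) z = c * (wirtZ A z + wirtZ B z) := by
  unfold wirtZ
  rw [fderiv_const_mul (a := fun w => A w + B w) (hA.add hB), show fderiv ℝ (fun w => A w + B w) z = fderiv ℝ A z + fderiv ℝ B z from fderiv_add hA hB]
  simp only [ContinuousLinearMap.smul_apply, ContinuousLinearMap.add_apply, smul_eq_mul]
  ring

lemma normSq_lt_one {w : ℂ} (hw : ‖w‖ < 1) : Complex.normSq w < 1 := by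
  rw [← Complex.sq_norm]
  nlinarith [norm_nonneg w]

lemma assembly (ν : ℝ) (m : ℕ) (p q n : ℕ) (c : ℂ) (a : ℝ) (hadef : a = ((p+q:ℕ):ℝ))
    (hb : 0 < 2*(ν-(m:ℝ))-1) (hpq : p*q = 0)
    (hkey : (n:ℝ)*((n:ℝ)+a+(2*(ν-(m:ℝ))-1)+1) + 2*ν*(q:ℝ)
        - (a+1)*(m:ℝ) = (m:ℝ)*(2*ν-(m:ℝ)-1))
    (z : ℂ) (hz : ‖z‖ < 1) :
    Hop ν (fun w : ℂ => c * (w^p * (starRingEnd ℂ w)^q *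
        ((gF a (2*(ν-(m:ℝ))-1) n m (Complex.normSq w) : ℝ) : ℂ))) z
      = ((4*(m:ℝ)*(2*ν - (m:ℝ) - 1) : ℝ) : ℂ) *
        (c * (z^p * (starRingEnd ℂ z)^q *
          ((gF a (2*(ν-(m:ℝ))-1) n m (Complex.normSq z) : ℝ) : ℂ))) := by
  set b : ℝ := 2*(ν-(m:ℝ))-1 with hbdef
  have ha : 0 ≤ a := by rw [hadef]; exact Nat.cast_nonneg _
  set F : ℂ → ℂ := fun w : ℂ => c * (w^p * (starRingEnd ℂ w)^q *
      ((gF a b n m (Complex.normSq w) : ℝ) : ℂ)) with hFdef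
  set Fbar : ℂ → ℂ := fun w : ℂ => c * ((q:ℂ) * (w^p * (starRingEnd ℂ w)^(q-1) *
        ((gF a b n m (Complex.normSq w) : ℝ) : ℂ))
      + (w^(p+1) * (starRingEnd ℂ w)^q *
        ((gF1 a b n m (Complex.normSq w) : ℝ) : ℂ))) with hFbardef
  -- step A
  have hbar : ∀ w : ℂ, ‖w‖ < 1 → wirtZbar F w = Fbar w := by
    intro w hw
    have hd : HasDerivAt (gF a b n m) (gF1 a b n m (Complex.normSq w)) (Complex.normSq w) :=
      hasDerivAt_gF a b n m (normSq_lt_one hw)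
    rw [hFdef, hFbardef]
    rw [wirtZbar_cmul (masterF_diff p q hd)]
    rw [wirtZbar_masterF p q hd]
    ring
  -- step B/C
  have hmem : {w : ℂ | ‖w‖ < 1} ∈ nhds z := by
    have : IsOpen {w : ℂ | ‖w‖ < 1} := isOpen_lt continuous_norm continuous_const
    exact this.mem_nhds hz
  have hev : wirtZbar F =ᶠ[nhds z] Fbar := Filter.eventually_of_mem hmem hbar
  have hwz : wirtZ (wirtZbar F) z = wirtZ Fbar z := by
    unfold wirtZ
    rw [hev.fderiv_eq]
  -- step D
  have htz : Complex.normSq z < 1 := normSq_lt_one hz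
  have hd0 : HasDerivAt (gF a b n m) (gF1 a b n m (Complex.normSq z)) (Complex.normSq z) :=
    hasDerivAt_gF a b n m htz
  have hd1 : HasDerivAt (gF1 a b n m) (gF2 a b n m (Complex.normSq z)) (Complex.normSq z) :=
    hasDerivAt_gF1 a b n m htz
  have hwFbar : wirtZ Fbar z = c * ((q:ℂ) *
        ((p:ℂ) * z^(p-1) * (starRingEnd ℂ z)^(q-1) * ((gF a b n m (Complex.normSq z) : ℝ):ℂ)
          + z^p * (starRingEnd ℂ z)^((q-1)+1) * ((gF1 a b n m (Complex.normSq z) : ℝ):ℂ))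
      + (((p+1:ℕ):ℂ) * z^p * (starRingEnd ℂ z)^q * ((gF1 a b n m (Complex.normSq z) : ℝ):ℂ)
          + z^(p+1) * (starRingEnd ℂ z)^(q+1) * ((gF2 a b n m (Complex.normSq z) : ℝ):ℂ))) := by
    rw [hFbardef]
    rw [wirtZ_cmul_add ((masterF_diff p (q-1) hd0).const_mul _) (masterF_diff (p+1) q hd1)]
    rw [wirtZ_cmul (masterF_diff p (q-1) hd0)]
    rw [wirtZ_masterF p (q-1) hd0, wirtZ_masterF (p+1) q hd1]
    norm_num
  -- real ODE
  have hODE := gODE a ν n m q ha hb hkey htz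
  -- final algebra
  unfold Hop
  rw [hwz, hwFbar, hbar z hz]
  rw [show ‖z‖ ^ 2 = Complex.normSq z from Complex.sq_norm z]
  have hC := congrArg (fun r : ℝ => (r : ℂ)) hODE
  push_cast at hC ⊢
  simp only [← Complex.mul_conj] at hC ⊢
  have hq1 : (q:ℂ) * (starRingEnd ℂ z)^((q-1)+1) = (q:ℂ) * (starRingEnd ℂ z)^q := by
    cases q with
    | zero => simp
    | succ i => norm_num
  have hq2 : (q:ℂ) * ((starRingEnd ℂ z)^(q-1) * (starRingEnd ℂ z))
      = (q:ℂ) * (starRingEnd ℂ z)^q := by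
    cases q with
    | zero => simp
    | succ i => rw [← pow_succ]; norm_num
  have hPQ : (p:ℂ) * (q:ℂ) = 0 := by
    have : ((p*q:ℕ):ℂ) = 0 := by rw [hpq]; norm_num
    push_cast at this
    exact this
  have haC : (a:ℂ) = (p:ℂ) + (q:ℂ) := by rw [hadef]; push_cast; ring
  rw [← hbdef] at hC
  rw [haC] at hC
  linear_combination (4 * c * z^p * (starRingEnd ℂ z)^q) * hC
    + (-4*(1 - z*(starRingEnd ℂ z))^2*c*z^(p-1)*(starRingEnd ℂ z)^(q-1)
        * ((gF a b n m (Complex.normSq z) : ℝ):ℂ)) * hPQ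
    + (-4*(1 - z*(starRingEnd ℂ z))^2*c*((gF1 a b n m (Complex.normSq z) : ℝ):ℂ)*z^p) * hq1
    + (8*(ν:ℂ)*(1 - z*(starRingEnd ℂ z))*c*z^p*((gF a b n m (Complex.normSq z) : ℝ):ℂ)) * hq2


end Stmt7Aux

/-- `φ_k^{ν,m}` is smooth on 𝔻 and satisfies
`H_ν φ_k^{ν,m} = 4m(2ν-m-1) φ_k^{ν,m}` pointwise on 𝔻. -/
theorem stmt7 (ν : ℝ) (hν : 1 < 2*ν) (m : ℕ) (hm : (m:ℝ) < ν - 1/2) (k : ℕ) :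
    ContDiffOn ℝ (⊤ : ℕ∞) (phiE ν m k) {z : ℂ | ‖z‖ < 1} ∧
    ∀ z ∈ {z : ℂ | ‖z‖ < 1},
      Hop ν (phiE ν m k) z = ((4*m*(2*ν - m - 1) : ℝ) : ℂ) * phiE ν m k z := by
  have hb : 0 < 2*(ν-(m:ℝ))-1 := by
    have : (m:ℝ) < ν - 1/2 := hm
    linarith
  by_cases hk : k ≤ m
  · rw [Stmt7Aux.phiE_eq_left ν m k hk]
    refine ⟨Stmt7Aux.contDiffOn_WF _ 0 (m-k) _ _ k m, ?_⟩
    intro z hz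
    have hz' : ‖z‖ < 1 := hz
    have hco : ((m-k:ℕ):ℝ) = (m:ℝ) - (k:ℝ) := by
      rw [Nat.cast_sub hk]
    have hkey : (k:ℝ)*((k:ℝ)+((m-k:ℕ):ℝ)+(2*(ν-(m:ℝ))-1)+1) + 2*ν*((m-k:ℕ):ℝ)
        - (((m-k:ℕ):ℝ)+1)*(m:ℝ) = (m:ℝ)*(2*ν-(m:ℝ)-1) := by
      rw [hco]; ring
    exact Stmt7Aux.assembly ν m 0 (m-k) k _ ((m-k:ℕ):ℝ) (by norm_num) hb (by simp)
      hkey z hz'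
  · rw [Stmt7Aux.phiE_eq_right ν m k hk]
    refine ⟨Stmt7Aux.contDiffOn_WF _ (k-m) 0 _ _ m m, ?_⟩
    intro z hz
    have hz' : ‖z‖ < 1 := hz
    have hk' : m ≤ k := by omega
    have hco : ((k-m:ℕ):ℝ) = (k:ℝ) - (m:ℝ) := by
      rw [Nat.cast_sub hk']
    have hkey : (m:ℝ)*((m:ℝ)+((k-m:ℕ):ℝ)+(2*(ν-(m:ℝ))-1)+1) + 2*ν*((0:ℕ):ℝ)
        - (((k-m:ℕ):ℝ)+1)*(m:ℝ) = (m:ℝ)*(2*ν-(m:ℝ)-1) := by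
      rw [hco]; push_cast; ring
    exact Stmt7Aux.assembly ν m (k-m) 0 m _ ((k-m:ℕ):ℝ) (by norm_num) hb (by simp)
      hkey z hz'
end

section
/- Let H be a separable complex Hilbert space with orthonormal basis (ψ_k)_{k∈ℕ}, let (X, μ) be a measure space, and let (f_k)_{k∈ℕ} be measurable functions forming an orthogonal family of nonzero elements of L²(X, μ), with ρ_k = ‖f_k‖²_{L²(X,μ)}. Assume ω(u) := Σ_{k=0}^∞ |f_k(u)|²/ρ_k satisfies 0 < ω(u) < ∞ for every u ∈ X, and for each u ∈ X define the coherent state Ψ_u := ω(u)^{−1/2} Σ_{k=0}^∞ (f_k(u)/ρ_k^{1/2}) ψ_k ∈ H. Then the following resolution of the identity holds: for all f, g ∈ H, ∫_X ⟨g, Ψ_u⟩ ⟨Ψ_u, f⟩ ω(u) dμ(u) = ⟨g, f⟩. -/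
/-!
The functions `ē_k = conj f_k / √ρ_k` form an orthonormal family in `L²(μ)`, so
`W x = Σ_k ⟪ψ_k, x⟫ ē_k` defines an isometry `W : H → L²(μ)`. Evaluating the series pointwise,
`(W x)(u) = ⟪v_u, x⟫` with `v_u = Σ_k (f_k(u)/√ρ_k) ψ_k = √ω(u) Ψ_u`, so the integrand is
`conj (W g) * W f` and the integral is `⟪W g, W f⟫ = ⟪g, f⟫`.
-/

open MeasureTheory ComplexConjugate
open scoped InnerProductSpace

namespace MeasureTheory.Lp

variable {α E ι : Type*} [MeasurableSpace α] {μ : Measure α} [NormedAddCommGroup E]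
  {p : ENNReal} [Fact (1 ≤ p)]

theorem ae_eq_of_hasSum [Countable ι] {F : ι → Lp E p μ} {S : Lp E p μ} (hS : HasSum F S)
    {g : ι → α → E} (hFg : ∀ i, F i =ᵐ[μ] g i) {s : α → E}
    (hs : ∀ᵐ u ∂μ, HasSum (fun i => g i u) (s u)) : S =ᵐ[μ] s := by
  obtain ⟨ns, hns, hae⟩ := (tendstoInMeasure_of_tendsto_Lp hS).exists_seq_tendsto_ae'
  filter_upwards [hae, hs, ae_all_iff.2 fun n => coeFn_fun_finsetSum (ns n) F, ae_all_iff.2 hFg]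
    with u hSu hsu hsum hFu
  refine tendsto_nhds_unique hSu ?_
  simp only [hsum, hFu]
  exact hsu.comp hns

end MeasureTheory.Lp

section

variable {𝕜 E F ι : Type*} [RCLike 𝕜] [NormedAddCommGroup E] [InnerProductSpace 𝕜 E]
  [NormedAddCommGroup F] [InnerProductSpace 𝕜 F]

theorem Orthonormal.hasSum_inner_tsum_smul [CompleteSpace E] {v : ι → E} (hv : Orthonormal 𝕜 v)
    {a : ι → 𝕜} (ha : Summable fun i => ‖a i‖ ^ 2) (x : E) :
    HasSum (fun i => conj (a i) * ⟪v i, x⟫_𝕜) ⟪∑' i, a i • v i, x⟫_𝕜 := by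
  have hsum : Summable fun i => a i • v i := by
    simpa only [LinearIsometry.toSpanSingleton_apply] using
      (hv.orthogonalFamily.summable_iff_norm_sq_summable a).2 ha
  simpa only [ContinuousLinearMap.map_smulₛₗ, innerSLFlip_apply_apply, smul_eq_mul] using
    hsum.hasSum.mapL (innerSLFlip 𝕜 x)

theorem HilbertBasis.exists_linearIsometry_hasSum [CompleteSpace F] (b : HilbertBasis ι 𝕜 E)
    {v : ι → F} (hv : Orthonormal 𝕜 v) :
    ∃ W : E →ₗᵢ[𝕜] F, ∀ x, HasSum (fun i => ⟪b i, x⟫_𝕜 • v i) (W x) :=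
  ⟨hv.orthogonalFamily.linearIsometry.comp b.repr.toLinearIsometry, fun x => by
    simpa only [LinearIsometry.coe_comp, LinearIsometryEquiv.coe_toLinearIsometry,
      Function.comp_apply, b.repr_apply_apply, LinearIsometry.toSpanSingleton_apply] using
      hv.orthogonalFamily.hasSum_linearIsometry (b.repr x)⟩

theorem inner_inv_sqrt_smul_mul_inner (v x y : E) {c : ℝ} (hc : 0 < c) :
    ⟪x, ((√c : ℝ) : 𝕜)⁻¹ • v⟫_𝕜 * ⟪((√c : ℝ) : 𝕜)⁻¹ • v, y⟫_𝕜 * (c : 𝕜) =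
      ⟪x, v⟫_𝕜 * ⟪v, y⟫_𝕜 := by
  have hsq : ((√c : ℝ) : 𝕜)⁻¹ * ((√c : ℝ) : 𝕜)⁻¹ * (c : 𝕜) = 1 := by
    rw [← mul_inv, ← RCLike.ofReal_mul, Real.mul_self_sqrt hc.le,
      inv_mul_cancel₀ (RCLike.ofReal_ne_zero.2 hc.ne')]
  rw [inner_smul_right, inner_smul_left, map_inv₀, RCLike.conj_ofReal]
  linear_combination (⟪x, v⟫_𝕜 * ⟪v, y⟫_𝕜) * hsq

end

namespace MeasureTheory.L2

variable {α 𝕜 ι : Type*} [MeasurableSpace α] {μ : Measure α} [RCLike 𝕜]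

theorem orthonormal_toLp [DecidableEq ι] {e : ι → α → 𝕜} (he : ∀ i, MemLp (e i) 2 μ)
    (h : ∀ i j, ∫ u, conj (e i u) * e j u ∂μ = if i = j then 1 else 0) :
    Orthonormal 𝕜 fun i => (he i).toLp (e i) := by
  refine orthonormal_iff_ite.2 fun i j => ?_
  rw [inner_def, ← h]
  refine integral_congr_ae ?_
  filter_upwards [(he i).coeFn_toLp, (he j).coeFn_toLp] with u hi hj
  rw [hi, hj, RCLike.inner_apply, mul_comm]

end MeasureTheory.L2

theorem integral_div_sqrt_mul_conj_div_sqrt {α ι 𝕜 : Type*} [MeasurableSpace α] {μ : Measure α}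
    [RCLike 𝕜] [DecidableEq ι] {f : ι → α → 𝕜} {ρ : ι → ℝ}
    (hρ : ∀ k, ρ k = ∫ u, ‖f k u‖ ^ 2 ∂μ) (hρpos : ∀ k, 0 < ρ k)
    (horth : ∀ j k, j ≠ k → ∫ u, f j u * conj (f k u) ∂μ = 0) (j k : ι) :
    ∫ u, f j u / (√(ρ j) : 𝕜) * conj (f k u / (√(ρ k) : 𝕜)) ∂μ = if j = k then 1 else 0 := by
  simp only [map_div₀, RCLike.conj_ofReal, div_mul_div_comm]
  rw [integral_div]
  split_ifs with hjk
  · subst hjk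
    have hsq : ((√(ρ j) : ℝ) : 𝕜) * (√(ρ j) : ℝ) = ρ j := by
      rw [← RCLike.ofReal_mul, Real.mul_self_sqrt (hρpos j).le]
    simp only [RCLike.mul_conj, ← RCLike.ofReal_pow]
    rw [hsq, integral_ofReal, ← hρ j, div_self (RCLike.ofReal_ne_zero.2 (hρpos j).ne')]
  · rw [horth j k hjk, zero_div]

/-- resolution of the identity for the coherent states
`Ψ_u = ω(u)^{-1/2} Σ_k (f_k(u)/√ρ_k) ψ_k`. -/
theorem stmt14 {H : Type*} [NormedAddCommGroup H] [InnerProductSpace ℂ H]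
    [CompleteSpace H] {X : Type*} [MeasurableSpace X] (μ : MeasureTheory.Measure X)
    (ψ : ℕ → H) (hψon : Orthonormal ℂ ψ)
    (hψtot : (Submodule.span ℂ (Set.range ψ)).topologicalClosure = ⊤)
    (f : ℕ → X → ℂ) (hf : ∀ k, MeasureTheory.MemLp (f k) 2 μ)
    (ρ : ℕ → ℝ) (hρ : ∀ k, ρ k = ∫ x, ‖f k x‖ ^ 2 ∂μ) (hρpos : ∀ k, 0 < ρ k)
    (horth : ∀ j k, j ≠ k → ∫ x, f j x * (starRingEnd ℂ) (f k x) ∂μ = 0)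
    (hω : ∀ u, Summable (fun k => ‖f k u‖ ^ 2 / ρ k))
    (hωpos : ∀ u, 0 < ∑' k : ℕ, ‖f k u‖ ^ 2 / ρ k)
    (Psi : X → H)
    (hPsi : ∀ u, Psi u = ((Real.sqrt (∑' k : ℕ, ‖f k u‖ ^ 2 / ρ k))⁻¹ : ℂ) •
        ∑' k : ℕ, (f k u / (Real.sqrt (ρ k) : ℂ)) • ψ k) :
    ∀ fv g : H,
      ∫ u, (inner ℂ g (Psi u) : ℂ) * (inner ℂ (Psi u) fv : ℂ) *
          (((∑' k : ℕ, ‖f k u‖ ^ 2 / ρ k : ℝ)) : ℂ) ∂μ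
        = (inner ℂ g fv : ℂ) := by
  intro fv g
  have hcoeff (u : X) : Summable fun k => ‖f k u / (√(ρ k) : ℂ)‖ ^ 2 :=
    (hω u).congr fun k => by
      rw [norm_div, div_pow, Complex.norm_real, Real.norm_of_nonneg (Real.sqrt_nonneg _),
        Real.sq_sqrt (hρpos k).le]
  set e : ℕ → X → ℂ := fun k u => conj (f k u / (√(ρ k) : ℂ))
  have he (k : ℕ) : MemLp (e k) 2 μ := ((hf k).mul_const _).star
  have hE : Orthonormal ℂ fun k => (he k).toLp (e k) :=
    L2.orthonormal_toLp he fun j k => by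
      refine Eq.trans ?_ (integral_div_sqrt_mul_conj_div_sqrt hρ hρpos horth j k)
      simp only [e, Complex.conj_conj]
      rfl
  let b : HilbertBasis ℕ ℂ H := HilbertBasis.mk hψon hψtot.ge
  obtain ⟨W, hW⟩ := b.exists_linearIsometry_hasSum hE
  have hWae (x : H) :
      W x =ᵐ[μ] fun u => ⟪∑' k, (f k u / (√(ρ k) : ℂ)) • ψ k, x⟫_ℂ :=
    Lp.ae_eq_of_hasSum (hW x)
      (fun k => (Lp.coeFn_smul _ _).trans ((he k).coeFn_toLp.const_smul _))
      (ae_of_all _ fun u => by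
        simpa only [b, HilbertBasis.coe_mk, e, map_div₀, Complex.conj_ofReal, Pi.smul_apply,
          smul_eq_mul, mul_comm] using hψon.hasSum_inner_tsum_smul (hcoeff u) x)
  calc _ = ∫ u, W fv u * conj (W g u) ∂μ := by
        refine integral_congr_ae ?_
        filter_upwards [hWae g, hWae fv] with u hgu hfu
        rw [hgu, hfu, hPsi u, inner_conj_symm]
        exact (inner_inv_sqrt_smul_mul_inner _ _ _ (hωpos u)).trans (mul_comm _ _)
    _ = ⟪W g, W fv⟫_ℂ := by simp only [L2.inner_def, RCLike.inner_apply]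
    _ = ⟪g, fv⟫_ℂ := W.inner_map_map g fv
end
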